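/- For every bounded bilinear form A : c₀ × c₀ → ℂ, the sum over all i, j of |A(e_i, e_j)|^(4/3) raised to the power 3/4 is at most √2 times the operator norm of A. -/

import Mathlib

open scoped ENNReal

noncomputable section

/-- The canonical basis vector `e i` of `c₀`, the space of complex null sequences. -/
def c0e (i : ℕ) : ZeroAtInftyContinuousMap ℕ ℂ :=
  { toContinuousMap := ⟨fun j => if j = i then 1 else 0, continuous_of_discreteTopology⟩
    zero_at_infty' := by
      refine Filter.Tendsto.congr' ?_ tendsto_const_nhds
      filter_upwards [Filter.mem_cocompact.mpr ⟨{i}, isCompact_singleton, subset_rfl⟩] with j hj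
      simp only [Set.mem_compl_iff, Set.mem_singleton_iff] at hj
      simp [hj] }

/-!
Put `a i j = A (e i, e j)`. Testing `A` against `∑ g i • e i` and `∑ ε j • e j`, where the `ε j`
run over all fourth roots of unity, bounds `∑_i ‖(a *ᵥ ε) i‖` by `‖A‖` for every `ε`. Averaged
over `ε`, Khintchine's inequality `E |∑ ε j b j| ≥ ‖b‖₂ / √2` (from `E |S|² = ‖b‖₂²`,
`E |S|⁴ ≤ 2 ‖b‖₂⁴` and Hölder) turns this into `∑_i ‖a i ·‖₂ ≤ √2 ‖A‖`, and likewise for columns.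
Hölder's and Minkowski's inequalities give
`∑_{i,j} |a i j|^{4/3} ≤ (∑_i ‖a i ·‖₂)^{2/3} (∑_j ‖a · j‖₂)^{2/3}`.
-/

open Finset Matrix Complex

lemma sum_mul_rpow_two_thirds_le {ι : Type*} (s : Finset ι) {x y : ι → ℝ}
    (hx : ∀ i ∈ s, 0 ≤ x i) (hy : ∀ i ∈ s, 0 ≤ y i) :
    ∑ i ∈ s, (x i * y i) ^ (2 / 3 : ℝ) ≤
      (∑ i ∈ s, x i) ^ (2 / 3 : ℝ) * (∑ i ∈ s, y i ^ 2) ^ (1 / 3 : ℝ) := by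
  have h := Real.Lr_rpow_le_Lp_mul_Lq_of_nonneg s (p := 1) (q := 2) (r := 2 / 3)
    ⟨by norm_num, by norm_num, by norm_num⟩ hx hy
  norm_num at h
  exact h

/-- The interpolation inequality `‖f‖₂ ≤ ‖f‖₁ ^ (1/3) * ‖f‖₄ ^ (2/3)`, raised to the sixth power. -/
lemma sum_sq_pow_three_le {ι : Type*} (s : Finset ι) {f : ι → ℝ} (hf : ∀ i ∈ s, 0 ≤ f i) :
    (∑ i ∈ s, f i ^ 2) ^ 3 ≤ (∑ i ∈ s, f i) ^ 2 * ∑ i ∈ s, f i ^ 4 := by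
  have h := sum_mul_rpow_two_thirds_le s hf fun i hi => pow_nonneg (hf i hi) 2
  have h1 : ∀ i ∈ s, (f i * f i ^ 2) ^ (2 / 3 : ℝ) = f i ^ 2 := fun i hi => by
    rw [← pow_succ', ← Real.rpow_natCast, ← Real.rpow_mul (hf i hi)]
    norm_num
  rw [sum_congr rfl h1] at h
  have hs : 0 ≤ ∑ i ∈ s, f i := sum_nonneg hf
  have hs4 : 0 ≤ ∑ i ∈ s, (f i ^ 2) ^ 2 := sum_nonneg fun i _ => by positivity
  calc (∑ i ∈ s, f i ^ 2) ^ 3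
      ≤ ((∑ i ∈ s, f i) ^ (2 / 3 : ℝ) * (∑ i ∈ s, (f i ^ 2) ^ 2) ^ (1 / 3 : ℝ)) ^ 3 :=
        pow_le_pow_left₀ (sum_nonneg fun i _ => sq_nonneg _) h 3
    _ = (∑ i ∈ s, f i) ^ 2 * ∑ i ∈ s, f i ^ 4 := by
        rw [mul_pow, ← Real.rpow_mul_natCast hs, ← Real.rpow_mul_natCast hs4]
        simp only [← pow_mul]
        norm_num

lemma sqrt_sum_sq_sum_le_sum_sqrt_sum_sq {ι κ : Type*} [Fintype ι] (s : Finset κ)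
    (t : ι → κ → ℝ) :
    √(∑ i, (∑ j ∈ s, t i j) ^ 2) ≤ ∑ j ∈ s, √(∑ i, t i j ^ 2) := by
  have h := norm_sum_le s fun j => (WithLp.toLp 2 fun i => t i j : EuclideanSpace ℝ ι)
  simpa only [EuclideanSpace.norm_eq, ← WithLp.toLp_sum, Real.norm_eq_abs, sq_abs,
    Finset.sum_apply] using h

lemma rpow_one_third_eq_sqrt_rpow_two_thirds {a : ℝ} (ha : 0 ≤ a) :
    a ^ (1 / 3 : ℝ) = √a ^ (2 / 3 : ℝ) := by
  rw [Real.sqrt_eq_rpow, ← Real.rpow_mul ha]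
  norm_num

lemma sum_sum_rpow_four_thirds_le {ι κ : Type*} [Fintype ι] [Fintype κ] (t : ι → κ → ℝ)
    (ht : ∀ i j, 0 ≤ t i j) :
    ∑ i, ∑ j, t i j ^ (4 / 3 : ℝ) ≤
      (∑ i, √(∑ j, t i j ^ 2)) ^ (2 / 3 : ℝ) * (∑ j, √(∑ i, t i j ^ 2)) ^ (2 / 3 : ℝ) := by
  set row : ι → ℝ := fun i => √(∑ j, t i j ^ 2)
  set rowSum : ι → ℝ := fun i => ∑ j, t i j
  have hrowSum : ∀ i, 0 ≤ rowSum i := fun i => sum_nonneg fun j _ => ht i j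
  have hrow : ∀ i, ∑ j, t i j ^ (4 / 3 : ℝ) ≤ (row i * rowSum i) ^ (2 / 3 : ℝ) := fun i => by
    have h := sum_mul_rpow_two_thirds_le univ (fun j _ => ht i j) (fun j _ => ht i j)
    rw [rpow_one_third_eq_sqrt_rpow_two_thirds (sum_nonneg fun j _ => sq_nonneg _),
      ← Real.mul_rpow (hrowSum i) (Real.sqrt_nonneg _), mul_comm] at h
    convert h using 2 with j
    rw [← sq, ← Real.rpow_natCast, ← Real.rpow_mul (ht i j)]
    norm_num
  calc ∑ i, ∑ j, t i j ^ (4 / 3 : ℝ)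
      ≤ ∑ i, (row i * rowSum i) ^ (2 / 3 : ℝ) := sum_le_sum fun i _ => hrow i
    _ ≤ (∑ i, row i) ^ (2 / 3 : ℝ) * (∑ i, rowSum i ^ 2) ^ (1 / 3 : ℝ) :=
        sum_mul_rpow_two_thirds_le univ (fun i _ => Real.sqrt_nonneg _) fun i _ => hrowSum i
    _ ≤ (∑ i, row i) ^ (2 / 3 : ℝ) * (∑ j, √(∑ i, t i j ^ 2)) ^ (2 / 3 : ℝ) := by
        rw [rpow_one_third_eq_sqrt_rpow_two_thirds (sum_nonneg fun i _ => sq_nonneg _)]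
        gcongr
        exact sqrt_sum_sq_sum_le_sum_sqrt_sum_sq univ t

section Khintchine

def quarterTurns {n : ℕ} (ε : Fin n → Fin 4) : Fin n → ℂ := fun j => I ^ (ε j : ℕ)

lemma norm_quarterTurns_le_one {n : ℕ} (ε : Fin n → Fin 4) : ‖quarterTurns ε‖ ≤ 1 :=
  (pi_norm_le_iff_of_nonneg zero_le_one).2 fun j => by simp [quarterTurns]

lemma sum_arrow_fin_succ {α M : Type*} [Fintype α] [AddCommMonoid M] {n : ℕ}
    (F : (Fin (n + 1) → α) → M) :
    ∑ ε, F ε = ∑ k, ∑ ε : Fin n → α, F (Fin.cons k ε) := by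
  rw [← (Fin.consEquiv fun _ => α).sum_comp, Fintype.sum_prod_type]
  rfl

lemma dotProduct_quarterTurns_cons {n : ℕ} (b : Fin (n + 1) → ℂ) (k : Fin 4)
    (ε : Fin n → Fin 4) :
    b ⬝ᵥ quarterTurns (Fin.cons k ε) = b 0 * I ^ (k : ℕ) + Fin.tail b ⬝ᵥ quarterTurns ε := by
  simp [dotProduct, Fin.sum_univ_succ, quarterTurns, Fin.tail]

lemma sum_fin_four_I_pow {M : Type*} [AddCommMonoid M] (f : ℂ → M) :
    ∑ k : Fin 4, f (I ^ (k : ℕ)) = f 1 + f I + f (-1) + f (-I) := by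
  simp [Fin.sum_univ_four, pow_succ]

lemma sum_normSq_mul_I_pow_add (u s : ℂ) :
    ∑ k : Fin 4, normSq (u * I ^ (k : ℕ) + s) = 4 * normSq u + 4 * normSq s := by
  rw [sum_fin_four_I_pow fun z => normSq (u * z + s)]
  simp only [normSq_apply, mul_re, mul_im, add_re, add_im, I_re, I_im, neg_re, neg_im, one_re,
    one_im]
  ring

lemma sum_normSq_sq_mul_I_pow_add (u s : ℂ) :
    ∑ k : Fin 4, normSq (u * I ^ (k : ℕ) + s) ^ 2 =
      4 * normSq u ^ 2 + 16 * normSq u * normSq s + 4 * normSq s ^ 2 := by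
  rw [sum_fin_four_I_pow fun z => normSq (u * z + s) ^ 2]
  simp only [normSq_apply, mul_re, mul_im, add_re, add_im, I_re, I_im, neg_re, neg_im, one_re,
    one_im]
  ring

lemma sum_normSq_dotProduct_quarterTurns {n : ℕ} (b : Fin n → ℂ) :
    ∑ ε : Fin n → Fin 4, normSq (b ⬝ᵥ quarterTurns ε) = 4 ^ n * ∑ j, normSq (b j) := by
  induction n with
  | zero => simp
  | succ n ih =>
    rw [sum_arrow_fin_succ, sum_comm]
    simp only [dotProduct_quarterTurns_cons, sum_normSq_mul_I_pow_add, sum_add_distrib, ← mul_sum,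
      ih, sum_const, card_univ, Fintype.card_fun, Fintype.card_fin, nsmul_eq_mul, Nat.cast_pow,
      Nat.cast_ofNat]
    rw [Fin.sum_univ_succ]
    simp only [Fin.tail]
    ring

/-- With real signs `±1` the constant would be `3`: averaging over fourth roots of unity also kills
the cross terms `b j ^ 2 * conj (b k) ^ 2`, and this is where the `√2` of the theorem comes from. -/
lemma sum_normSq_sq_dotProduct_quarterTurns_le {n : ℕ} (b : Fin n → ℂ) :
    ∑ ε : Fin n → Fin 4, normSq (b ⬝ᵥ quarterTurns ε) ^ 2 ≤
      2 * 4 ^ n * (∑ j, normSq (b j)) ^ 2 := by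
  induction n with
  | zero => simp
  | succ n ih =>
    rw [sum_arrow_fin_succ, sum_comm]
    simp only [dotProduct_quarterTurns_cons, sum_normSq_sq_mul_I_pow_add, sum_add_distrib,
      ← mul_sum, sum_normSq_dotProduct_quarterTurns, sum_const, card_univ, Fintype.card_fun,
      Fintype.card_fin, nsmul_eq_mul, Nat.cast_pow, Nat.cast_ofNat]
    have ih' := ih (Fin.tail b)
    rw [Fin.sum_univ_succ]
    simp only [Fin.tail] at ih' ⊢
    have h4 : (0 : ℝ) ≤ 4 ^ n := by positivity
    have hu := normSq_nonneg (b 0)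
    have hP : 0 ≤ ∑ j : Fin n, normSq (b j.succ) := sum_nonneg fun j _ => normSq_nonneg _
    rw [pow_succ (4 : ℝ) n]
    nlinarith [ih', mul_nonneg (mul_nonneg h4 hu) hP, mul_nonneg h4 (sq_nonneg (normSq (b 0)))]

theorem khintchine_quarterTurns {n : ℕ} (b : Fin n → ℂ) :
    4 ^ n * √(∑ j, ‖b j‖ ^ 2) ≤ √2 * ∑ ε : Fin n → Fin 4, ‖b ⬝ᵥ quarterTurns ε‖ := by
  have second : ∑ ε : Fin n → Fin 4, ‖b ⬝ᵥ quarterTurns ε‖ ^ 2 = 4 ^ n * ∑ j, ‖b j‖ ^ 2 := by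
    simpa only [Complex.sq_norm] using sum_normSq_dotProduct_quarterTurns b
  have fourth : ∑ ε : Fin n → Fin 4, ‖b ⬝ᵥ quarterTurns ε‖ ^ 4 ≤
      2 * 4 ^ n * (∑ j, ‖b j‖ ^ 2) ^ 2 := by
    simpa only [← Complex.sq_norm, ← pow_mul] using sum_normSq_sq_dotProduct_quarterTurns_le b
  set P := ∑ j, ‖b j‖ ^ 2
  set T := ∑ ε : Fin n → Fin 4, ‖b ⬝ᵥ quarterTurns ε‖
  have hP : 0 ≤ P := sum_nonneg fun j _ => sq_nonneg _
  have hT : 0 ≤ T := sum_nonneg fun ε _ => norm_nonneg _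
  have h4 : (0 : ℝ) < 4 ^ n := by positivity
  have moments :=
    sum_sq_pow_three_le univ fun ε (_ : ε ∈ univ) => norm_nonneg (b ⬝ᵥ quarterTurns ε)
  rw [second] at moments
  have key : (4 ^ n) ^ 2 * P ≤ 2 * T ^ 2 := by
    rcases hP.eq_or_lt with hP0 | hPpos
    · rw [← hP0, mul_zero]
      positivity
    · have : (4 ^ n) ^ 2 * P * (4 ^ n * P ^ 2) ≤ 2 * T ^ 2 * (4 ^ n * P ^ 2) := by
        calc (4 ^ n) ^ 2 * P * (4 ^ n * P ^ 2) = (4 ^ n * P) ^ 3 := by ring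
          _ ≤ T ^ 2 * (2 * 4 ^ n * P ^ 2) := moments.trans (by gcongr)
          _ = 2 * T ^ 2 * (4 ^ n * P ^ 2) := by ring
      exact le_of_mul_le_mul_right this (by positivity)
  calc (4 : ℝ) ^ n * √P = √((4 ^ n) ^ 2 * P) := by
        rw [Real.sqrt_mul (by positivity), Real.sqrt_sq h4.le]
    _ ≤ √(2 * T ^ 2) := Real.sqrt_le_sqrt key
    _ = √2 * T := by rw [Real.sqrt_mul zero_le_two, Real.sqrt_sq hT]

end Khintchine

section BilinearForm

variable {ι κ : Type*} [Fintype ι] [Fintype κ] {M : ℝ}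

lemma sum_norm_mulVec_le {a : Matrix ι κ ℂ} (hM : 0 ≤ M)
    (hA : ∀ g h, ‖g ⬝ᵥ (a *ᵥ h)‖ ≤ M * ‖g‖ * ‖h‖) (h : κ → ℂ) :
    ∑ i, ‖(a *ᵥ h) i‖ ≤ M * ‖h‖ := by
  choose c hc_norm hc using fun i => Complex.exists_norm_eq_mul_self ((a *ᵥ h) i)
  have hc_le : ‖c‖ ≤ 1 := (pi_norm_le_iff_of_nonneg zero_le_one).2 fun i => (hc_norm i).le
  have hsum : ((∑ i, ‖(a *ᵥ h) i‖ : ℝ) : ℂ) = c ⬝ᵥ (a *ᵥ h) := by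
    push_cast
    exact sum_congr rfl fun i _ => hc i
  calc ∑ i, ‖(a *ᵥ h) i‖ = ‖c ⬝ᵥ (a *ᵥ h)‖ := by
        rw [← hsum, Complex.norm_real, Real.norm_of_nonneg (sum_nonneg fun i _ => norm_nonneg _)]
    _ ≤ M * ‖c‖ * ‖h‖ := hA c h
    _ ≤ M * 1 * ‖h‖ := by gcongr
    _ = M * ‖h‖ := by rw [mul_one]

lemma sum_sqrt_sum_norm_sq_le {n : ℕ} {a : Matrix ι (Fin n) ℂ} (hM : 0 ≤ M)
    (hA : ∀ g h, ‖g ⬝ᵥ (a *ᵥ h)‖ ≤ M * ‖g‖ * ‖h‖) :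
    ∑ i, √(∑ j, ‖a i j‖ ^ 2) ≤ √2 * M := by
  refine le_of_mul_le_mul_left ?_ (by positivity : (0 : ℝ) < 4 ^ n)
  calc (4 : ℝ) ^ n * ∑ i, √(∑ j, ‖a i j‖ ^ 2)
      ≤ ∑ i, √2 * ∑ ε : Fin n → Fin 4, ‖(a *ᵥ quarterTurns ε) i‖ := by
        rw [mul_sum]
        exact sum_le_sum fun i _ => khintchine_quarterTurns (a i)
    _ = √2 * ∑ ε : Fin n → Fin 4, ∑ i, ‖(a *ᵥ quarterTurns ε) i‖ := by
        rw [← mul_sum, sum_comm]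
    _ ≤ √2 * ∑ _ε : Fin n → Fin 4, M := by
        gcongr with ε
        calc ∑ i, ‖(a *ᵥ quarterTurns ε) i‖ ≤ M * ‖quarterTurns ε‖ := sum_norm_mulVec_le hM hA _
          _ ≤ M * 1 := by gcongr; exact norm_quarterTurns_le_one ε
          _ = M := mul_one M
    _ = 4 ^ n * (√2 * M) := by
        simp only [sum_const, card_univ, Fintype.card_fun, Fintype.card_fin, nsmul_eq_mul]
        push_cast
        ring

theorem sum_sum_norm_rpow_four_thirds_le {m n : ℕ} {a : Matrix (Fin m) (Fin n) ℂ} (hM : 0 ≤ M)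
    (hA : ∀ g h, ‖g ⬝ᵥ (a *ᵥ h)‖ ≤ M * ‖g‖ * ‖h‖) :
    ∑ i, ∑ j, ‖a i j‖ ^ (4 / 3 : ℝ) ≤ (√2 * M) ^ (4 / 3 : ℝ) := by
  have hAt : ∀ g h, ‖g ⬝ᵥ (aᵀ *ᵥ h)‖ ≤ M * ‖g‖ * ‖h‖ := fun g h => by
    rw [dotProduct_transpose_mulVec, mul_right_comm]
    exact hA h g
  have hrows := sum_sqrt_sum_norm_sq_le hM hA
  have hcols : ∑ j, √(∑ i, ‖a i j‖ ^ 2) ≤ √2 * M := sum_sqrt_sum_norm_sq_le hM hAt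
  have hM2 : 0 ≤ √2 * M := by positivity
  calc ∑ i, ∑ j, ‖a i j‖ ^ (4 / 3 : ℝ)
      ≤ (∑ i, √(∑ j, ‖a i j‖ ^ 2)) ^ (2 / 3 : ℝ) * (∑ j, √(∑ i, ‖a i j‖ ^ 2)) ^ (2 / 3 : ℝ) :=
        sum_sum_rpow_four_thirds_le _ fun i j => norm_nonneg _
    _ ≤ (√2 * M) ^ (2 / 3 : ℝ) * (√2 * M) ^ (2 / 3 : ℝ) := by
        gcongr
    _ = (√2 * M) ^ (4 / 3 : ℝ) := by
        rw [← Real.rpow_add' hM2 (by norm_num)]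
        norm_num

end BilinearForm

lemma ZeroAtInftyContinuousMap.sum_apply {α β ι : Type*} [TopologicalSpace α] [TopologicalSpace β]
    [AddCommMonoid β] [ContinuousAdd β] (s : Finset ι) (f : ι → ZeroAtInftyContinuousMap α β)
    (x : α) : (∑ i ∈ s, f i) x = ∑ i ∈ s, f i x :=
  map_sum (⟨⟨fun f : ZeroAtInftyContinuousMap α β => f x, rfl⟩, fun _ _ => rfl⟩ :
    ZeroAtInftyContinuousMap α β →+ β) f s

lemma c0e_apply (i k : ℕ) : c0e i k = if k = i then 1 else 0 := rfl

lemma norm_sum_smul_c0e_le {n : ℕ} (g : Fin n → ℂ) : ‖∑ i, g i • c0e i‖ ≤ ‖g‖ := by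
  rw [← ZeroAtInftyContinuousMap.norm_toBCF_eq_norm,
    BoundedContinuousFunction.norm_le (norm_nonneg g)]
  intro k
  change ‖(∑ i, g i • c0e i) k‖ ≤ ‖g‖
  simp only [ZeroAtInftyContinuousMap.sum_apply, ZeroAtInftyContinuousMap.smul_apply, c0e_apply,
    smul_eq_mul, mul_ite, mul_one, mul_zero]
  by_cases hk : k < n
  · rw [sum_eq_single ⟨k, hk⟩ (fun i _ hi => if_neg fun h => hi (Fin.ext h.symm)) (by simp),
      if_pos rfl]
    exact norm_le_pi_norm g _
  · rw [sum_eq_zero fun i _ => if_neg (by omega), norm_zero]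
    exact norm_nonneg g

lemma ContinuousMultilinearMap.apply_sum_smul_sum_smul {𝕜 E ι κ : Type*} [RCLike 𝕜]
    [NormedAddCommGroup E] [NormedSpace 𝕜 E] [Fintype ι] [Fintype κ]
    (A : ContinuousMultilinearMap 𝕜 (fun _ : Fin 2 => E) 𝕜) (u : ι → E) (v : κ → E)
    (g : ι → 𝕜) (h : κ → 𝕜) :
    A ![∑ i, g i • u i, ∑ j, h j • v j] = g ⬝ᵥ (Matrix.of (fun i j => A ![u i, v j]) *ᵥ h) := by
  change (A.curryLeft (∑ i, g i • u i)).curryLeft (∑ j, h j • v j) ![] = _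
  simp only [_root_.map_sum, _root_.map_smul, _root_.sum_apply, _root_.smul_apply,
    curryLeft_apply]
  simp only [dotProduct, mulVec, of_apply, mul_sum, smul_eq_mul]
  rw [sum_comm]
  refine sum_congr rfl fun i _ => sum_congr rfl fun j _ => ?_
  change h j * (g i * A ![u i, v j]) = _
  ring

lemma ContinuousMultilinearMap.norm_apply_pair_le {𝕜 E F : Type*} [NontriviallyNormedField 𝕜]
    [NormedAddCommGroup E] [NormedSpace 𝕜 E] [NormedAddCommGroup F] [NormedSpace 𝕜 F]
    (A : ContinuousMultilinearMap 𝕜 (fun _ : Fin 2 => E) F) (x y : E) :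
    ‖A ![x, y]‖ ≤ ‖A‖ * ‖x‖ * ‖y‖ := by
  simpa [Fin.prod_univ_two, mul_assoc] using A.le_opNorm ![x, y]

lemma tsum_tsum_le_of_sum_range_le {F : ℕ → ℕ → ℝ} (hF : ∀ i j, 0 ≤ F i j) {C : ℝ}
    (h : ∀ n, ∑ i ∈ range n, ∑ j ∈ range n, F i j ≤ C) : ∑' i, ∑' j, F i j ≤ C := by
  classical
  have hbox : ∀ s : Finset (ℕ × ℕ), ∑ p ∈ s, F p.1 p.2 ≤ C := fun s => by
    obtain ⟨n, hn⟩ := exists_nat_subset_range (s.image Prod.fst ∪ s.image Prod.snd)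
    have hs : s ⊆ range n ×ˢ range n := subset_product.trans <|
      product_subset_product (subset_union_left.trans hn) (subset_union_right.trans hn)
    calc ∑ p ∈ s, F p.1 p.2 ≤ ∑ p ∈ range n ×ˢ range n, F p.1 p.2 :=
          sum_le_sum_of_subset_of_nonneg hs fun p _ _ => hF _ _
      _ ≤ C := by rw [sum_product]; exact h n
  have hsum : Summable fun p : ℕ × ℕ => F p.1 p.2 := summable_of_sum_le (fun p => hF _ _) hbox
  rw [← hsum.tsum_prod' fun i => hsum.prod_factor i]
  exact hsum.tsum_le_of_sum_le hbox

/-- **Littlewood's 4/3 inequality.** For every bounded bilinear form `A : c₀ × c₀ → ℂ`,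
`(∑_{i,j} |A(e_i,e_j)|^{4/3})^{3/4} ≤ √2 ‖A‖`. -/
theorem littlewood_four_thirds
    (A : ContinuousMultilinearMap ℂ (fun _ : Fin 2 => ZeroAtInftyContinuousMap ℕ ℂ) ℂ) :
    (∑' i : ℕ, ∑' j : ℕ, ‖A ![c0e i, c0e j]‖ ^ ((4 : ℝ) / 3)) ^ ((3 : ℝ) / 4) ≤
      Real.sqrt 2 * ‖A‖ := by
  have hfinite : ∀ n, ∑ i ∈ range n, ∑ j ∈ range n, ‖A ![c0e i, c0e j]‖ ^ ((4 : ℝ) / 3) ≤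
      (√2 * ‖A‖) ^ ((4 : ℝ) / 3) := fun n => by
    simp only [sum_range]
    refine sum_sum_norm_rpow_four_thirds_le (a := of fun i j : Fin n => A ![c0e i, c0e j])
      (norm_nonneg A) fun g h => ?_
    rw [← A.apply_sum_smul_sum_smul]
    calc _ ≤ ‖A‖ * _ * _ := A.norm_apply_pair_le _ _
      _ ≤ ‖A‖ * ‖g‖ * ‖h‖ := by gcongr <;> exact norm_sum_smul_c0e_le _
  have hA : 0 ≤ √2 * ‖A‖ := by positivity
  calc _ ≤ ((√2 * ‖A‖) ^ ((4 : ℝ) / 3)) ^ ((3 : ℝ) / 4) := by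
        gcongr
        exact tsum_tsum_le_of_sum_range_le (fun _ _ => by positivity) hfinite
    _ = √2 * ‖A‖ := by
        rw [← Real.rpow_mul hA]
        norm_num

end
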